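/- arXiv:2009.07614 — 3 statements merged into one kernel-verified Lean document; each statement's English description precedes it below -/
import Mathlib

section
/- Let G be a finite abelian group. For all a, b ∈ G one has 2 · ( Σ_{x∈G} g(x+a) ∧ g(x+b) ) = 0 in ⋀[ℤ]² A. (The sum S(a,b) = Σ_{x∈G} g(x+a) ∧ g(x+b) is both symmetric and antisymmetric in (a,b).) -/
noncomputable def wedge (R : Type*) [CommRing R] {M : Type*} [AddCommGroup M] [Module R M]
    (u v : M) : ⋀[R]^2 M :=
  ⟨ExteriorAlgebra.ιMulti R 2 ![u, v],
    ExteriorAlgebra.ιMulti_range R 2 (Set.mem_range_self _)⟩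

/-- The additive counterpart of `u(a,b,c,d) ∧ (1 - u(a,b,c,d))`, built from the
three-variable expression `φ`. -/
noncomputable def phi (R : Type*) [CommRing R] {M G : Type*} [AddCommGroup M] [Module R M]
    [AddCommGroup G] (g : G → M) (x y z : G) : ⋀[R]^2 M :=
  wedge R (g (z + x) + g (z - x)) (g (y + x) + g (y - x))
    + wedge R (g (y + x) + g (y - x)) (g (z + y) + g (z - y))
    + wedge R (g (z + y) + g (z - y)) (g (z + x) + g (z - x))

noncomputable def delta (R : Type*) [CommRing R] {M G : Type*} [AddCommGroup M] [Module R M]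
    [AddCommGroup G] (g : G → M) (a b c d : G) : ⋀[R]^2 M :=
  phi R g a b c + phi R g c d a + phi R g b a d + phi R g d c b

/-- The additive counterpart of the Manin 3-term expression
`g_a ∧ g_b + g_b ∧ g_c + g_c ∧ g_a` with `a + b + c = 0`. -/
noncomputable def psi (R : Type*) [CommRing R] {M G : Type*} [AddCommGroup M] [Module R M]
    [AddCommGroup G] (g : G → M) (a b : G) : ⋀[R]^2 M :=
  wedge R (g a) (g b) + wedge R (g b) (g (-a - b)) + wedge R (g (-a - b)) (g a)

lemma wedge_swap' {A : Type*} [AddCommGroup A] (u v : A) :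
    wedge ℤ v u = - wedge ℤ u v := by
  apply Subtype.ext
  show ExteriorAlgebra.ιMulti ℤ 2 ![v, u] = -(ExteriorAlgebra.ιMulti ℤ 2 ![u, v])
  have h : ![v, u] = ![u, v] ∘ Equiv.swap (0 : Fin 2) 1 := by
    funext i; fin_cases i <;> simp
  rw [h]
  exact (ExteriorAlgebra.ιMulti ℤ 2).map_swap _ (by decide)

/-- The sum `S(a,b) = Σ_{x ∈ G} g(x+a) ∧ g(x+b)` is both symmetric and antisymmetric
in `(a,b)`, hence is killed by 2. -/
theorem two_smul_sum_wedge_eq_zero {A G : Type*} [AddCommGroup A] [AddCommGroup G] [Fintype G]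
    (g : G → A) (hg : ∀ x : G, g (-x) = g x) (a b : G) :
    2 • ∑ x : G, wedge ℤ (g (x + a)) (g (x + b)) = 0 := by
  have hsym : ∑ x : G, wedge ℤ (g (x + a)) (g (x + b))
      = ∑ x : G, wedge ℤ (g (x + b)) (g (x + a)) := by
    refine Fintype.sum_equiv ((Equiv.addRight (a + b)).trans (Equiv.neg G)) _ _ ?_
    intro x
    have h1 : -(x + (a + b)) + a = -(x + b) := by abel
    have h2 : -(x + (a + b)) + b = -(x + a) := by abel
    simp only [Equiv.trans_apply, Equiv.coe_addRight, Equiv.neg_apply, h1, h2, hg]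
  have hanti : ∑ x : G, wedge ℤ (g (x + b)) (g (x + a))
      = - ∑ x : G, wedge ℤ (g (x + a)) (g (x + b)) := by
    rw [← Finset.sum_neg_distrib]
    exact Finset.sum_congr rfl fun x _ => wedge_swap' _ _
  have : ∑ x : G, wedge ℤ (g (x + a)) (g (x + b))
      = - ∑ x : G, wedge ℤ (g (x + a)) (g (x + b)) := hsym.trans hanti
  rw [two_smul]
  nth_rewrite 2 [this]
  simp
end

section
/- Let G be a finite abelian group and write |G| for its cardinality. For all a, b, c ∈ G one has |G| · φ(a,b,c) = Σ_{d∈G} δ(a,b,c,d) in ⋀[ℤ]² A. -/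
section Aux

lemma wedge_coe (R : Type*) [CommRing R] {M : Type*} [AddCommGroup M] [Module R M] (u v : M) :
    ((wedge R u v : ⋀[R]^2 M) : ExteriorAlgebra R M)
      = ExteriorAlgebra.ι R u * ExteriorAlgebra.ι R v := by
  simp [wedge, ExteriorAlgebra.ιMulti_apply, List.ofFn_succ]

lemma wedge_add_left (R : Type*) [CommRing R] {M : Type*} [AddCommGroup M] [Module R M]
    (u u' v : M) : wedge R (u + u') v = wedge R u v + wedge R u' v := by
  apply Subtype.ext
  push_cast [wedge_coe]
  simp [add_mul]

lemma wedge_add_right (R : Type*) [CommRing R] {M : Type*} [AddCommGroup M] [Module R M]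
    (u v v' : M) : wedge R u (v + v') = wedge R u v + wedge R u v' := by
  apply Subtype.ext
  push_cast [wedge_coe]
  simp [mul_add]

lemma wedge_self (R : Type*) [CommRing R] {M : Type*} [AddCommGroup M] [Module R M]
    (u : M) : wedge R u u = 0 := by
  apply Subtype.ext
  push_cast [wedge_coe]
  simp [ExteriorAlgebra.ι_sq_zero]

lemma wedge_anti (R : Type*) [CommRing R] {M : Type*} [AddCommGroup M] [Module R M]
    (u v : M) : wedge R u v = - wedge R v u := by
  have h := wedge_self R (u + v)
  rw [wedge_add_left, wedge_add_right, wedge_add_right, wedge_self, wedge_self] at h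
  simp at h
  linear_combination (norm := abel) h

variable {A G : Type*} [AddCommGroup A] [AddCommGroup G] [Fintype G] (g : G → A)

lemma sum_shift_add (x : G) : ∑ d : G, g (d + x) = ∑ d : G, g d :=
  Fintype.sum_equiv (Equiv.addRight x) (fun d => g (d + x)) g (fun _ => rfl)

lemma sum_shift_sub (x : G) : ∑ d : G, g (d - x) = ∑ d : G, g d :=
  Fintype.sum_equiv (Equiv.subRight x) (fun d => g (d - x)) g (fun _ => rfl)

lemma hFsum (x : G) :
    ∑ d : G, (g (d + x) + g (d - x)) = (∑ d : G, g d) + ∑ d : G, g d := by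
  rw [Finset.sum_add_distrib, sum_shift_add, sum_shift_sub]

/-- `T x = ∑_d g(d) ∧ g(d+x)`. -/
noncomputable def Tt (x : G) : ⋀[ℤ]^2 A := ∑ d : G, wedge ℤ (g d) (g (d + x))

lemma Tt_neg (x : G) : Tt g (-x) = - Tt g x := by
  unfold Tt
  calc ∑ d : G, wedge ℤ (g d) (g (d + -x))
      = ∑ d : G, wedge ℤ (g (d + x)) (g (d + x + -x)) :=
        (Fintype.sum_equiv (Equiv.addRight x)
          (fun d => wedge ℤ (g (d + x)) (g (d + x + -x)))
          (fun d => wedge ℤ (g d) (g (d + -x))) (fun _ => rfl)).symm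
    _ = ∑ d : G, wedge ℤ (g (d + x)) (g d) := by simp [add_neg_cancel_right]
    _ = ∑ d : G, - wedge ℤ (g d) (g (d + x)) :=
        Finset.sum_congr rfl (fun d _ => wedge_anti ℤ _ _)
    _ = - ∑ d : G, wedge ℤ (g d) (g (d + x)) := by
        rw [Finset.sum_neg_distrib]

lemma quad_shift (u v : G) :
    ∑ d : G, wedge ℤ (g (d + u)) (g (d + v)) = Tt g (v - u) := by
  unfold Tt
  calc ∑ d : G, wedge ℤ (g (d + u)) (g (d + v))
      = ∑ d : G, wedge ℤ (g (d + u)) (g (d + u + (v - u))) := by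
        apply Finset.sum_congr rfl
        intro d _
        rw [show d + u + (v - u) = d + v by abel]
    _ = ∑ d : G, wedge ℤ (g d) (g (d + (v - u))) :=
        Fintype.sum_equiv (Equiv.addRight u)
          (fun d => wedge ℤ (g (d + u)) (g (d + u + (v - u))))
          (fun d => wedge ℤ (g d) (g (d + (v - u)))) (fun _ => rfl)

lemma quadB (x y : G) :
    ∑ d : G, wedge ℤ (g (d + x) + g (d - x)) (g (d + y) + g (d - y)) = 0 := by
  have hrw : ∀ d : G, wedge ℤ (g (d + x) + g (d - x)) (g (d + y) + g (d - y)) =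
      (wedge ℤ (g (d + x)) (g (d + y)) + wedge ℤ (g (d + x)) (g (d + -y)))
        + (wedge ℤ (g (d + -x)) (g (d + y)) + wedge ℤ (g (d + -x)) (g (d + -y))) := by
    intro d
    rw [wedge_add_left, wedge_add_right, wedge_add_right]
    simp [sub_eq_add_neg]
  rw [Finset.sum_congr rfl (fun d _ => hrw d), Finset.sum_add_distrib,
    Finset.sum_add_distrib, Finset.sum_add_distrib,
    quad_shift, quad_shift, quad_shift, quad_shift]
  rw [show (-y : G) - x = -(x + y) by abel, show (y : G) - -x = x + y by abel,
    show (-y : G) - -x = -(y - x) by abel, Tt_neg, Tt_neg]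
  abel

lemma sum_wedge_F_right (u : A) (x : G) :
    ∑ d : G, wedge ℤ u (g (d + x) + g (d - x))
      = wedge ℤ u ((∑ d : G, g d) + ∑ d : G, g d) := by
  rw [← hFsum g x]
  exact (map_sum (AddMonoidHom.mk' (fun v => wedge ℤ u v) (wedge_add_right ℤ u)) _ _).symm

lemma sum_wedge_F_left (u : A) (x : G) :
    ∑ d : G, wedge ℤ (g (d + x) + g (d - x)) u
      = wedge ℤ ((∑ d : G, g d) + ∑ d : G, g d) u := by
  rw [← hFsum g x]
  exact (map_sum (AddMonoidHom.mk' (fun v => wedge ℤ v u) (fun p q => wedge_add_left ℤ p q u)) _ _).symm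

end Aux

/-- Lemma 4.4 of Brunault, *On the K₄ group of modular curves*:
`|G| · φ(a,b,c) = Σ_{d ∈ G} δ(a,b,c,d)`. -/
theorem card_smul_phi_eq_sum_delta {A G : Type*} [AddCommGroup A] [AddCommGroup G] [Fintype G]
    (g : G → A) (hg : ∀ x : G, g (-x) = g x) (a b c : G) :
    (Fintype.card G : ℤ) • phi ℤ g a b c = ∑ d : G, delta ℤ g a b c d := by
  have hgsub : ∀ x y : G, g (x - y) = g (y - x) := fun x y => by rw [← hg (y - x), neg_sub]
  have key : ∀ d : G,
      phi ℤ g c d a + phi ℤ g b a d + phi ℤ g d c b =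
        ((wedge ℤ (g (d + c) + g (d - c)) (g (d + a) + g (d - a))
          + wedge ℤ (g (d + a) + g (d - a)) (g (d + b) + g (d - b)))
          + wedge ℤ (g (d + b) + g (d - b)) (g (d + c) + g (d - c)))
        + (((((wedge ℤ (g (a + c) + g (a - c)) (g (d + c) + g (d - c))
          + wedge ℤ (g (d + a) + g (d - a)) (g (a + c) + g (a - c)))
          + wedge ℤ (g (d + b) + g (d - b)) (g (b + a) + g (b - a)))
          + wedge ℤ (g (b + a) + g (b - a)) (g (d + a) + g (d - a)))
          + wedge ℤ (g (c + b) + g (c - b)) (g (d + b) + g (d - b)))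
          + wedge ℤ (g (d + c) + g (d - c)) (g (c + b) + g (c - b))) := by
    intro d
    simp only [phi,
      show g (a - d) = g (d - a) from hgsub a d,
      show g (b - d) = g (d - b) from hgsub b d,
      show g (c - d) = g (d - c) from hgsub c d,
      show g (a - b) = g (b - a) from hgsub a b,
      show g (b - c) = g (c - b) from hgsub b c,
      show a + d = d + a from add_comm a d,
      show b + d = d + b from add_comm b d,
      show c + d = d + c from add_comm c d,
      show a + b = b + a from add_comm a b,
      show b + c = c + b from add_comm b c]
    abel
  have h0 : ((∑ d : G, phi ℤ g c d a) + ∑ d : G, phi ℤ g b a d)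
      + (∑ d : G, phi ℤ g d c b) = 0 := by
    rw [← Finset.sum_add_distrib, ← Finset.sum_add_distrib,
      Finset.sum_congr rfl (fun d _ => key d), Finset.sum_add_distrib]
    have hQ : ∑ d : G,
        ((wedge ℤ (g (d + c) + g (d - c)) (g (d + a) + g (d - a))
          + wedge ℤ (g (d + a) + g (d - a)) (g (d + b) + g (d - b)))
          + wedge ℤ (g (d + b) + g (d - b)) (g (d + c) + g (d - c))) = 0 := by
      rw [Finset.sum_add_distrib, Finset.sum_add_distrib, quadB, quadB, quadB]
      simp
    rw [hQ, zero_add]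
    rw [Finset.sum_add_distrib, Finset.sum_add_distrib, Finset.sum_add_distrib,
      Finset.sum_add_distrib, Finset.sum_add_distrib]
    rw [sum_wedge_F_right g (g (a + c) + g (a - c)) c,
      sum_wedge_F_left g (g (a + c) + g (a - c)) a,
      sum_wedge_F_left g (g (b + a) + g (b - a)) b,
      sum_wedge_F_right g (g (b + a) + g (b - a)) a,
      sum_wedge_F_right g (g (c + b) + g (c - b)) b,
      sum_wedge_F_left g (g (c + b) + g (c - b)) c]
    rw [wedge_anti ℤ ((∑ d : G, g d) + ∑ d : G, g d) (g (a + c) + g (a - c)),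
      wedge_anti ℤ ((∑ d : G, g d) + ∑ d : G, g d) (g (b + a) + g (b - a)),
      wedge_anti ℤ ((∑ d : G, g d) + ∑ d : G, g d) (g (c + b) + g (c - b))]
    abel
  simp only [delta]
  rw [Finset.sum_add_distrib, Finset.sum_add_distrib, Finset.sum_add_distrib,
    Finset.sum_const, Finset.card_univ]
  rw [show ((Fintype.card G : ℤ) • phi ℤ g a b c) = Fintype.card G • phi ℤ g a b c from
    natCast_zsmul _ _]
  linear_combination (norm := abel) h0.symm
end

section
/- Let φ ∈ 𝒫 with expansion data j_∞, j_0, (a_n^{(j)}), (b_n^{(j)}). Then φ is absolutely integrable on (0,∞) (with respect to Lebesgue measure) if and only if a_0^{(j)} = 0 for all 0 ≤ j ≤ j_∞ and b_0^{(j)} = 0 for all 1 ≤ j ≤ j_0. -/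
/-- A sequence of complex numbers has polynomial growth. -/
def PolyGrowth (c : ℕ → ℂ) : Prop :=
  ∃ (C : ℝ) (k : ℕ), 0 < C ∧ ∀ n : ℕ, ‖c n‖ ≤ C * (1 + n) ^ k

/-- The expansion `Σ_{j=0}^{J} y^j Σ_{n=0}^∞ a_n^{(j)} e^{-2πny/N}`. -/
noncomputable def expSum (N : ℕ) (J : ℕ) (a : ℕ → ℕ → ℂ) (y : ℝ) : ℂ :=
  ∑ j ∈ Finset.range (J + 1),
    (y : ℂ) ^ j * ∑' n : ℕ, a j n * (Real.exp (-(2 * Real.pi * n * y / N)) : ℂ)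

/-- Membership in the class `𝒫` of functions on `(0,∞)` (Definition 6.3 of the paper):
`φ(y)` and `φ(1/y)` both admit absolutely convergent expansions
`Σ_{j} y^j Σ_{n≥0} c_n^{(j)} e^{-2πny/N}` with coefficients of polynomial growth. -/
def MemP (N : ℕ) (φ : ℝ → ℂ) : Prop :=
  ∃ (jI j0 : ℕ) (a b : ℕ → ℕ → ℂ),
    (∀ j, PolyGrowth (a j)) ∧ (∀ j, PolyGrowth (b j)) ∧
    (∀ y : ℝ, 0 < y →
      (∀ j, Summable fun n : ℕ => ‖a j n‖ * Real.exp (-(2 * Real.pi * n * y / N))) ∧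
      (∀ j, Summable fun n : ℕ => ‖b j n‖ * Real.exp (-(2 * Real.pi * n * y / N))) ∧
      φ y = expSum N jI a y ∧ φ (1 / y) = expSum N j0 b y)

/-!
Split `(0,∞)` at `1` and substitute `y ↦ 1/y` on `(0,1)`: `φ` is integrable iff `φ(y)` and
`y⁻² φ(1/y)` are integrable on `(1,∞)`. In both expansions the terms with `n ≥ 1` are a power of
`y` times `O(e^{-2πy/N})`, hence integrable. This leaves the polynomial `p_a(y) = Σ_j a_0^{(j)} y^j`
and `y⁻² p_b(y) = b_0^{(0)} y⁻² + y⁻¹ (divX p_b)(y)`. The term `b_0^{(0)} y⁻²` is integrable, and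
for `k ≥ -1` the function `y^k p(y)` is integrable at infinity only when `p = 0`, because a nonzero
polynomial is eventually bounded away from `0`.
-/

open MeasureTheory Set Filter Asymptotics Polynomial

noncomputable def expSeries (c : ℕ → ℂ) (α y : ℝ) : ℂ :=
  ∑' n : ℕ, c n * Real.exp (-(α * n * y))

lemma norm_mul_ofReal_exp (z : ℂ) (x : ℝ) : ‖z * (Real.exp x : ℂ)‖ = ‖z‖ * Real.exp x := by
  simp

namespace PolyGrowth

variable {c : ℕ → ℂ} {α : ℝ}

theorem summable_norm_mul_exp (hc : PolyGrowth c) {r : ℝ} (hr : 0 < r) :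
    Summable fun n : ℕ => ‖c n‖ * Real.exp (-(r * n)) := by
  obtain ⟨C, k, -, hC⟩ := hc
  have hshift : Summable fun n : ℕ => ((n + 1 : ℕ) : ℝ) ^ k * Real.exp (-r * (n + 1 : ℕ)) :=
    (summable_nat_add_iff 1).mpr (Real.summable_pow_mul_exp_neg_nat_mul k hr)
  refine (hshift.mul_left (C * Real.exp r)).of_nonneg_of_le (fun n => by positivity) fun n => ?_
  have hexp : Real.exp (-(r * n)) = Real.exp r * Real.exp (-r * (n + 1 : ℕ)) := by
    rw [← Real.exp_add]; push_cast; ring_nf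
  calc ‖c n‖ * Real.exp (-(r * n)) ≤ C * (1 + n) ^ k * Real.exp (-(r * n)) := by
        gcongr; exact hC n
    _ = C * Real.exp r * (((n + 1 : ℕ) : ℝ) ^ k * Real.exp (-r * (n + 1 : ℕ))) := by
        rw [hexp]; push_cast; ring

theorem summable_mul_exp (hc : PolyGrowth c) (hα : 0 < α) {y : ℝ} (hy : 0 < y) :
    Summable fun n : ℕ => c n * (Real.exp (-(α * n * y)) : ℂ) := by
  refine Summable.of_norm ((hc.summable_norm_mul_exp (mul_pos hα hy)).congr fun n => ?_)
  rw [norm_mul_ofReal_exp]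
  ring_nf

theorem continuousOn_expSeries (hc : PolyGrowth c) (hα : 0 < α) {s : ℝ} (hs : 0 < s) :
    ContinuousOn (expSeries c α) (Ici s) := by
  refine continuousOn_tsum (fun n => by fun_prop) (hc.summable_norm_mul_exp (mul_pos hα hs))
    fun n y hy => ?_
  have : α * n * s ≤ α * n * y := mul_le_mul_of_nonneg_left hy (by positivity)
  rw [norm_mul_ofReal_exp]
  exact mul_le_mul_of_nonneg_left (Real.exp_le_exp.mpr (by linarith)) (norm_nonneg _)

theorem isBigO_expSeries_sub (hc : PolyGrowth c) (hα : 0 < α) :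
    (fun y => expSeries c α y - c 0) =O[atTop] fun y => Real.exp (-α * y) := by
  set u : ℕ → ℝ := fun n => ‖c (n + 1)‖ * Real.exp (-(α * (n + 1 : ℕ)))
  have hu : Summable u := (summable_nat_add_iff 1).mpr (hc.summable_norm_mul_exp hα)
  refine IsBigO.of_bound ((∑' n, u n) * Real.exp α) ?_
  filter_upwards [eventually_ge_atTop 1] with y hy
  have hterm : ∀ n : ℕ, ‖c (n + 1) * (Real.exp (-(α * (n + 1 : ℕ) * y)) : ℂ)‖ ≤
      u n * Real.exp α * Real.exp (-α * y) := by
    intro n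
    simp only [norm_mul_ofReal_exp, u, mul_assoc, ← Real.exp_add]
    gcongr
    push_cast
    nlinarith [mul_nonneg (mul_nonneg hα.le n.cast_nonneg) (sub_nonneg.2 hy)]
  rw [expSeries, (hc.summable_mul_exp hα (zero_lt_one.trans_le hy)).tsum_eq_zero_add]
  simp only [CharP.cast_eq_zero, mul_zero, zero_mul, neg_zero, Real.exp_zero, Complex.ofReal_one,
    mul_one, add_sub_cancel_left, Real.norm_eq_abs, abs_of_pos (Real.exp_pos _)]
  exact tsum_of_norm_bounded ((hu.mul_right _).mul_right _).hasSum hterm |>.trans_eq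
    (by rw [tsum_mul_right, tsum_mul_right])

theorem integrableOn_Ioi_one_zpow_mul_expSeries_sub (hc : PolyGrowth c) (hα : 0 < α) (k : ℤ) :
    IntegrableOn (fun y : ℝ => (y : ℂ) ^ k * (expSeries c α y - c 0)) (Ioi 1) := by
  have hcont : ContinuousOn (fun y : ℝ => (y : ℂ) ^ k * (expSeries c α y - c 0)) (Ici 1) := by
    refine ContinuousOn.mul ?_ ((hc.continuousOn_expSeries hα one_pos).sub continuousOn_const)
    exact (Complex.continuous_ofReal.continuousOn).zpow₀ k fun y hy =>
      Or.inl (Complex.ofReal_ne_zero.mpr (zero_lt_one.trans_le hy).ne')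
  have hzpow : (fun y : ℝ => (y : ℂ) ^ k) =O[atTop] fun y => Real.exp (α / 2 * y) := by
    have h := (isLittleO_zpow_exp_pos_mul_atTop k (half_pos hα)).isBigO
    rw [← Complex.isBigO_ofReal_left] at h
    simpa only [Complex.ofReal_zpow] using h
  have hO : (fun y : ℝ => (y : ℂ) ^ k * (expSeries c α y - c 0)) =O[atTop]
      fun y => Real.exp (-(α / 2) * y) := by
    refine (hzpow.mul (hc.isBigO_expSeries_sub hα)).congr_right fun y => ?_
    rw [← Real.exp_add]; ring_nf
  exact (integrableOn_Ici_iff_integrableOn_Ioi).mp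
    ((hcont.locallyIntegrableOn measurableSet_Ici).integrableOn_of_isBigO_atTop hO
      ⟨Ioi 0, Ioi_mem_atTop 0, exp_neg_integrableOn_Ioi 0 (half_pos hα)⟩)

end PolyGrowth

theorem integrableOn_Ioi_one_zpow_mul_sum_expSeries_sub {c : ℕ → ℕ → ℂ}
    (hc : ∀ j, PolyGrowth (c j)) {α : ℝ} (hα : 0 < α) (k : ℤ) (J : ℕ) :
    IntegrableOn (fun y : ℝ => (y : ℂ) ^ k *
      ∑ j ∈ Finset.range (J + 1), (y : ℂ) ^ j * (expSeries (c j) α y - c j 0)) (Ioi 1) := by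
  simp only [Finset.mul_sum]
  refine integrable_finsetSum _ fun j _ =>
    ((hc j).integrableOn_Ioi_one_zpow_mul_expSeries_sub hα (k + j)).congr_fun
      (fun y hy => ?_) measurableSet_Ioi
  dsimp only
  rw [zpow_add₀ (Complex.ofReal_ne_zero.mpr (zero_lt_one.trans hy).ne'), zpow_natCast, mul_assoc]

theorem expSum_eq_eval_add (N J : ℕ) (a : ℕ → ℕ → ℂ) (y : ℝ) :
    expSum N J a y = (∑ j ∈ Finset.range (J + 1), monomial j (a j 0)).eval (y : ℂ) +
      ∑ j ∈ Finset.range (J + 1), (y : ℂ) ^ j * (expSeries (a j) (2 * Real.pi / N) y - a j 0) := by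
  have hexp : ∀ n : ℕ, -(2 * Real.pi * n * y / N) = -(2 * Real.pi / N * n * y) := fun n => by ring
  simp only [expSum, expSeries, eval_finsetSum, eval_monomial, ← Finset.sum_add_distrib, hexp]
  exact Finset.sum_congr rfl fun j _ => by ring

namespace Polynomial

section Semiring

variable {R : Type*} [Semiring R]

theorem coeff_sum_range_monomial (c : ℕ → R) (J n : ℕ) :
    (∑ j ∈ Finset.range (J + 1), monomial j (c j)).coeff n = if n ≤ J then c n else 0 := by
  simp [coeff_monomial]

theorem sum_range_monomial_eq_zero_iff (c : ℕ → R) (J : ℕ) :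
    ∑ j ∈ Finset.range (J + 1), monomial j (c j) = 0 ↔ ∀ j ≤ J, c j = 0 := by
  simp only [Polynomial.ext_iff, coeff_sum_range_monomial, coeff_zero, ite_eq_right_iff]

theorem divX_sum_range_monomial_eq_zero_iff (c : ℕ → R) (J : ℕ) :
    divX (∑ j ∈ Finset.range (J + 1), monomial j (c j)) = 0 ↔
      ∀ j, 1 ≤ j → j ≤ J → c j = 0 := by
  simp only [Polynomial.ext_iff, coeff_divX, coeff_sum_range_monomial, coeff_zero]
  refine ⟨fun h j hj1 hjJ => ?_, fun h n => ?_⟩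
  · obtain ⟨n, rfl⟩ := Nat.exists_eq_add_of_le' hj1
    simpa [hjJ] using h n
  · split_ifs with hn
    exacts [h _ n.succ_pos hn, rfl]

end Semiring

theorem exists_pos_eventually_le_norm_eval (p : ℂ[X]) (hp : p ≠ 0) :
    ∃ δ > 0, ∀ᶠ y : ℝ in atTop, δ ≤ ‖p.eval (y : ℂ)‖ := by
  by_cases hdeg : 0 < p.degree
  · have hz : Tendsto (fun y : ℝ => ‖(y : ℂ)‖) atTop atTop := by
      simpa only [Complex.norm_real] using tendsto_norm_atTop_atTop
    exact ⟨1, one_pos, (p.tendsto_norm_atTop hdeg hz).eventually_ge_atTop 1⟩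
  · rw [eq_C_of_degree_le_zero (not_lt.mp hdeg)] at hp ⊢
    exact ⟨‖p.coeff 0‖, norm_pos_iff.mpr (C_ne_zero.mp hp), by simp⟩

theorem integrableOn_Ioi_one_zpow_mul_eval_iff (p : ℂ[X]) {k : ℤ} (hk : -1 ≤ k) :
    IntegrableOn (fun y : ℝ => (y : ℂ) ^ k * p.eval (y : ℂ)) (Ioi 1) ↔ p = 0 := by
  refine ⟨fun h => ?_, fun hp => by simp [hp]⟩
  by_contra hp
  obtain ⟨δ, hδ, hev⟩ := p.exists_pos_eventually_le_norm_eval hp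
  obtain ⟨M, hM⟩ := eventually_atTop.mp hev
  apply not_integrableOn_Ioi_inv (a := max M 1)
  refine ((h.mono_set (Ioi_subset_Ioi (le_max_right M 1))).norm.const_mul δ⁻¹).mono'
    measurable_inv.aestronglyMeasurable ((ae_restrict_iff' measurableSet_Ioi).mpr
      (ae_of_all _ fun y hy => ?_))
  have hy1 : 1 < y := (le_max_right M 1).trans_lt hy
  have hy0 : 0 < y := zero_lt_one.trans hy1
  have hinv : y⁻¹ ≤ y ^ k := by
    simpa only [zpow_neg_one] using zpow_le_zpow_right₀ hy1.le hk
  rw [norm_mul, norm_zpow, Complex.norm_real, Real.norm_of_nonneg hy0.le,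
    Real.norm_of_nonneg (inv_nonneg.mpr hy0.le), le_inv_mul_iff₀ hδ]
  calc δ * y⁻¹ ≤ ‖p.eval (y : ℂ)‖ * y ^ k :=
        mul_le_mul (hM y ((le_max_left M 1).trans hy.le)) hinv (by positivity) (norm_nonneg _)
    _ = y ^ k * ‖p.eval (y : ℂ)‖ := mul_comm _ _

theorem integrableOn_Ioi_one_eval_iff (p : ℂ[X]) :
    IntegrableOn (fun y : ℝ => p.eval (y : ℂ)) (Ioi 1) ↔ p = 0 := by
  simpa using p.integrableOn_Ioi_one_zpow_mul_eval_iff (k := 0) (by norm_num)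

theorem integrableOn_Ioi_one_zpow_neg_two_mul_eval_iff (p : ℂ[X]) :
    IntegrableOn (fun y : ℝ => (y : ℂ) ^ (-2 : ℤ) * p.eval (y : ℂ)) (Ioi 1) ↔ p.divX = 0 := by
  have hconst : IntegrableOn (fun y : ℝ => (y : ℂ) ^ (-2 : ℤ) * p.coeff 0) (Ioi 1) := by
    have h : IntegrableOn (fun y : ℝ => ((y ^ (-2 : ℝ) : ℝ) : ℂ) * p.coeff 0) (Ioi 1) :=
      ((integrableOn_Ioi_rpow_iff one_pos).mpr (by norm_num)).ofReal.mul_const _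
    refine h.congr_fun (fun y _ => ?_) measurableSet_Ioi
    dsimp only
    rw [show (-2 : ℝ) = ((-2 : ℤ) : ℝ) by norm_num, Real.rpow_intCast, Complex.ofReal_zpow]
  rw [← p.divX.integrableOn_Ioi_one_zpow_mul_eval_iff le_rfl]
  refine Iff.trans (integrableOn_congr_fun (fun y hy => ?_) measurableSet_Ioi)
    (integrable_add_iff_integrable_left' hconst)
  have hy : (y : ℂ) ≠ 0 := Complex.ofReal_ne_zero.mpr (zero_lt_one.trans hy).ne'
  conv_lhs => rw [← p.divX_mul_X_add]
  simp only [eval_add, eval_mul, eval_X, eval_C]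
  rw [mul_add, show (-2 : ℤ) = -1 + -1 by norm_num, zpow_add₀ hy, zpow_neg_one]
  field_simp

end Polynomial

theorem integrableOn_Ioo_zero_one_iff_comp_inv {E : Type*} [NormedAddCommGroup E]
    [NormedSpace ℝ E] (f : ℝ → E) :
    IntegrableOn f (Ioo 0 1) ↔ IntegrableOn (fun x => (x ^ 2)⁻¹ • f x⁻¹) (Ioi 1) := by
  have himage : Inv.inv '' Ioi (1 : ℝ) = Ioo 0 1 := by
    rw [image_inv_eq_inv, inv_Ioi₀ one_pos, inv_one]
  rw [← himage, integrableOn_image_iff_integrableOn_abs_deriv_smul measurableSet_Ioi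
    (fun x hx => (hasDerivAt_inv (zero_lt_one.trans hx).ne').hasDerivWithinAt) inv_injective.injOn]
  simp only [abs_neg, abs_inv, abs_pow, sq_abs]

/-- A function `φ ∈ 𝒫` with expansion data `j_∞, j_0, a, b` is absolutely (Lebesgue-)
integrable on `(0,∞)` if and only if `a_0^{(j)} = 0` for `0 ≤ j ≤ j_∞` and
`b_0^{(j)} = 0` for `1 ≤ j ≤ j_0`. -/
theorem memP_integrableOn_iff (N : ℕ) (hN : 1 ≤ N) (φ : ℝ → ℂ) (jI j0 : ℕ)
    (a b : ℕ → ℕ → ℂ) (ha : ∀ j, PolyGrowth (a j)) (hb : ∀ j, PolyGrowth (b j))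
    (hφ : ∀ y : ℝ, 0 < y → φ y = expSum N jI a y)
    (hφ' : ∀ y : ℝ, 0 < y → φ (1 / y) = expSum N j0 b y) :
    MeasureTheory.IntegrableOn φ (Set.Ioi (0 : ℝ)) ↔
      ((∀ j ≤ jI, a j 0 = 0) ∧ (∀ j, 1 ≤ j → j ≤ j0 → b j 0 = 0)) := by
  have hα : 0 < 2 * Real.pi / N := by
    have : (0 : ℝ) < N := by exact_mod_cast hN
    positivity
  have hA : IntegrableOn φ (Ioi 1) ↔ ∑ j ∈ Finset.range (jI + 1), monomial j (a j 0) = 0 := by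
    have htail := integrableOn_Ioi_one_zpow_mul_sum_expSeries_sub ha hα 0 jI
    simp only [zpow_zero, one_mul] at htail
    refine (integrableOn_congr_fun (fun y hy => ?_) measurableSet_Ioi).trans
      ((integrable_add_iff_integrable_left' htail).trans
        (integrableOn_Ioi_one_eval_iff _))
    rw [hφ y (zero_lt_one.trans hy), expSum_eq_eval_add]
  have hB : IntegrableOn φ (Ioo 0 1) ↔
      (∑ j ∈ Finset.range (j0 + 1), monomial j (b j 0)).divX = 0 := by
    rw [integrableOn_Ioo_zero_one_iff_comp_inv]
    refine (integrableOn_congr_fun (fun y hy => ?_) measurableSet_Ioi).trans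
      ((integrable_add_iff_integrable_left'
        (integrableOn_Ioi_one_zpow_mul_sum_expSeries_sub hb hα (-2) j0)).trans
        (integrableOn_Ioi_one_zpow_neg_two_mul_eval_iff _))
    rw [← one_div y, hφ' y (zero_lt_one.trans hy), expSum_eq_eval_add, Complex.real_smul, ← mul_add]
    push_cast
    rw [zpow_neg, zpow_ofNat]
  rw [← Ioo_union_Ici_eq_Ioi one_pos, integrableOn_union, integrableOn_Ici_iff_integrableOn_Ioi,
    hA, hB, sum_range_monomial_eq_zero_iff, divX_sum_range_monomial_eq_zero_iff, and_comm]
end
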